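/- arXiv:math/0005311 — 3 statements merged into one kernel-verified Lean document; each statement's English description precedes it below -/
import Mathlib

section
/- Let G be a profinite group and G_1, …, G_n closed subgroups which topologically generate G. Suppose each finite embedding problem for (G, G_1, …, G_n) has a solution. Then G is the free profinite product of G_1, …, G_n. -/
section

variable {n : ℕ} {G : Type} [Group G] [TopologicalSpace G] [IsTopologicalGroup G]
  (D : Fin n → Subgroup G)
  {A B : Type} [Group A] [TopologicalSpace A] [IsTopologicalGroup A]
  [Group B] [TopologicalSpace B] [IsTopologicalGroup B]

/-- `(φ : G → A, ψ : B → A, E 1, …, E n)` is an embedding problem for `(G, D 1, …, D n)`: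
`φ, ψ` are continuous epimorphisms, the `E i` are closed subgroups of `B` which topologically
generate `B`, and `ψ` maps `E i` isomorphically onto `φ(D i)` for each `i`. -/
def IsEmbeddingProblem (φ : G →* A) (ψ : B →* A) (E : Fin n → Subgroup B) : Prop :=
  Continuous φ ∧ Function.Surjective φ ∧ Continuous ψ ∧ Function.Surjective ψ ∧
  (∀ i, IsClosed (E i : Set B)) ∧ (⨆ i, E i).topologicalClosure = ⊤ ∧
  ∀ i, Set.BijOn ψ (E i) (φ '' (D i))

/-- `γ` is a solution of the embedding problem `(φ, ψ, E 1, …, E n)`: a continuous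
epimorphism `γ : G → B` with `ψ ∘ γ = φ` and `γ(D i) = E i` for each `i`. -/
def IsEPSolution (φ : G →* A) (ψ : B →* A) (E : Fin n → Subgroup B) (γ : G →* B) : Prop :=
  Continuous γ ∧ Function.Surjective γ ∧ (∀ x, ψ (γ x) = φ x) ∧
  ∀ i, (D i).map γ = E i

end

/-- `G` with closed subgroups `D i` is the free profinite product of the `D i`. -/
def IsFreeProfiniteProduct {n : ℕ} (G : Type) [Group G] [TopologicalSpace G]
    [IsTopologicalGroup G] (D : Fin n → Subgroup G) : Prop :=
  (∀ i, IsClosed (D i : Set G)) ∧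
  (⨆ i, D i).topologicalClosure = ⊤ ∧
  ∀ (H : Type) [Group H] [TopologicalSpace H] [IsTopologicalGroup H] [CompactSpace H]
      [T2Space H] [TotallyDisconnectedSpace H]
    (η : ∀ i, ↥(D i) →* H), (∀ i, Continuous (η i)) →
    ∃! φ : G →* H, Continuous φ ∧ ∀ i (x : ↥(D i)), φ x = η i x

/-!
For a finite discrete group `F`, pick an open normal subgroup `N` of `G` on which every `η i`
vanishes. The graphs of the maps `D i → G/N × F` generate a finite group `B`, and projecting `B`
onto `G/N`, with the graphs as distinguished subgroups, is a finite embedding problem; the `F`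
coordinate of a solution extends all `η i`.

For a profinite `H`, let `Γ ≤ G × H` be the closure of the subgroup generated by the graphs of the
`η i`. By compactness `Γ` projects onto `G`. If `(1, h) ∈ Γ`, then for each open normal `U` of `H`
the extension `G → H/U` given by the finite case shows that `h ∈ U`; hence `h = 1`. So `Γ` is the
graph of a homomorphism `G → H`, continuous because `Γ` is compact. Uniqueness holds because the
`D i` generate `G` topologically.
-/

theorem Subgroup.iSup_subgroupOf_iSup_eq_top {P : Type*} [Group P] {ι : Sort*}
    (S : ι → Subgroup P) : ⨆ i, (S i).subgroupOf (⨆ j, S j) = ⊤ := by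
  apply Subgroup.map_injective (⨆ j, S j).subtype_injective
  rw [Subgroup.map_iSup, ← MonoidHom.range_eq_map, Subgroup.range_subtype]
  simp only [Subgroup.subgroupOf_map_subtype]
  exact iSup_congr fun i => inf_of_le_left (le_iSup S i)

theorem MonoidHom.bijOn_fst_range_prod {K P Q : Type*} [Group K] [Group P] [Group Q]
    (f : K →* P) (g : K →* Q) (h : f.ker ≤ g.ker) :
    Set.BijOn Prod.fst ((f.prod g).range : Set (P × Q)) f.range := by
  refine ⟨?_, ?_, ?_⟩
  · rintro _ ⟨a, rfl⟩
    exact ⟨a, rfl⟩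
  · rintro _ ⟨a, rfl⟩ _ ⟨b, rfl⟩ hab
    have hfab : f a = f b := hab
    exact Prod.ext hfab ((g.eq_iff).2 (h ((f.eq_iff).1 hfab)))
  · rintro _ ⟨a, rfl⟩
    exact ⟨_, ⟨a, rfl⟩, rfl⟩

theorem MonoidHom.bijOn_fst_subgroupOf_range_prod {K P Q : Type*} [Group K] [Group P] [Group Q]
    (f : K →* P) (g : K →* Q) (h : f.ker ≤ g.ker) {B : Subgroup (P × Q)}
    (hB : (f.prod g).range ≤ B) :
    Set.BijOn ((MonoidHom.fst P Q).comp B.subtype) ((f.prod g).range.subgroupOf B) f.range := by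
  have hval : Set.BijOn Subtype.val ((f.prod g).range.subgroupOf B : Set B) (f.prod g).range :=
    ⟨fun b hb => hb, Subtype.val_injective.injOn, fun y hy => ⟨⟨y, hB hy⟩, hy, rfl⟩⟩
  exact (f.bijOn_fst_range_prod g h).comp hval

theorem Subgroup.map_eq_top_of_topologicalClosure_eq_top {G Q : Type*} [Group G]
    [TopologicalSpace G] [IsTopologicalGroup G] [Group Q] [TopologicalSpace Q]
    [DiscreteTopology Q] {S : Subgroup G} (hS : S.topologicalClosure = ⊤) {q : G →* Q}
    (hq : Continuous q) (hsurj : Function.Surjective q) : S.map q = ⊤ := by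
  refine eq_top_iff.2 fun y _ => ?_
  obtain ⟨x, rfl⟩ := hsurj y
  have hx : x ∈ _root_.closure (S : Set G) := by
    rw [← Subgroup.topologicalClosure_coe, hS]
    trivial
  simpa only [closure_discrete, ← Subgroup.coe_map, SetLike.mem_coe] using
    image_closure_subset_closure_image hq ⟨x, hx, rfl⟩

theorem exists_openNormalSubgroup_subgroupOf_le_ker {G F : Type*} [Group G] [TopologicalSpace G]
    [IsTopologicalGroup G] [CompactSpace G] [TotallyDisconnectedSpace G] [Group F]
    [TopologicalSpace F] [DiscreteTopology F] {ι : Type*} [Finite ι] {D : ι → Subgroup G}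
    (η : ∀ i, D i →* F) (hη : ∀ i, Continuous (η i)) :
    ∃ N : OpenNormalSubgroup G, ∀ i, (N : Subgroup G).subgroupOf (D i) ≤ (η i).ker := by
  have hW : ∀ i, ∃ W : Set G, IsOpen W ∧ ((↑) : D i → G) ⁻¹' W = (η i).ker := fun i =>
    isOpen_induced_iff.1 ((η i).coe_ker ▸ (isOpen_discrete _).preimage (hη i))
  choose W hWopen hWker using hW
  have h1 : (1 : G) ∈ ⋂ i, W i := Set.mem_iInter.2 fun i =>
    show (1 : D i) ∈ ((↑) : D i → G) ⁻¹' W i by rw [hWker]; exact one_mem _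
  obtain ⟨N, hN⟩ :=
    ProfiniteGrp.exist_openNormalSubgroup_sub_open_nhds_of_one (isOpen_iInter_of_finite hWopen) h1
  refine ⟨N, fun i x hx => ?_⟩
  rw [← SetLike.mem_coe, ← hWker]
  exact Set.mem_iInter.1 (hN hx) i

def SolvesFiniteEmbeddingProblems {n : ℕ} {G : Type} [Group G] [TopologicalSpace G]
    [IsTopologicalGroup G] (D : Fin n → Subgroup G) : Prop :=
  ∀ (A B : Type) [Group A] [TopologicalSpace A] [IsTopologicalGroup A]
    [CompactSpace A] [T2Space A] [TotallyDisconnectedSpace A]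
    [Group B] [TopologicalSpace B] [IsTopologicalGroup B]
    [CompactSpace B] [T2Space B] [TotallyDisconnectedSpace B] [Finite B]
    (φ : G →* A) (ψ : B →* A) (E : Fin n → Subgroup B),
    IsEmbeddingProblem D φ ψ E → ∃ γ : G →* B, IsEPSolution D φ ψ E γ

theorem SolvesFiniteEmbeddingProblems.exists_extension {n : ℕ} {G : Type} [Group G]
    [TopologicalSpace G] [IsTopologicalGroup G] [CompactSpace G] [TotallyDisconnectedSpace G]
    {D : Fin n → Subgroup G} (hsolve : SolvesFiniteEmbeddingProblems D)
    (hgen : (⨆ i, D i).topologicalClosure = ⊤) (F : Type) [Group F] [TopologicalSpace F]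
    [IsTopologicalGroup F] [DiscreteTopology F] [Finite F] (η : ∀ i, D i →* F)
    (hη : ∀ i, Continuous (η i)) :
    ∃ φ : G →* F, Continuous φ ∧ ∀ i (x : D i), φ x = η i x := by
  obtain ⟨N, hN⟩ := exists_openNormalSubgroup_subgroupOf_le_ker η hη
  let q := QuotientGroup.mk' (N : Subgroup G)
  let f : ∀ i, D i →* (G ⧸ (N : Subgroup G)) × F := fun i => (q.comp (D i).subtype).prod (η i)
  let B := ⨆ i, (f i).range
  let ψ := (MonoidHom.fst _ F).comp B.subtype
  let E : Fin n → Subgroup B := fun i => (f i).range.subgroupOf B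
  have hker : ∀ i, (q.comp (D i).subtype).ker ≤ (η i).ker := fun i => by
    rw [← MonoidHom.comap_ker, QuotientGroup.ker_mk']
    exact hN i
  have hbij : ∀ i, Set.BijOn ψ (E i) (q '' D i) := fun i => by
    have hfst := MonoidHom.bijOn_fst_subgroupOf_range_prod _ _ (hker i)
      (le_iSup (fun i => (f i).range) i)
    rwa [MonoidHom.range_comp, Subgroup.range_subtype, Subgroup.coe_map] at hfst
  have hψ : ψ.range = ⊤ := by
    rw [MonoidHom.range_comp, Subgroup.range_subtype, Subgroup.map_iSup]
    have hfst : ∀ i, (MonoidHom.fst _ F).comp (f i) = q.comp (D i).subtype := fun i =>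
      MonoidHom.fst_comp_prod _ _
    simp_rw [MonoidHom.map_range, hfst, MonoidHom.range_comp, Subgroup.range_subtype]
    rw [← Subgroup.map_iSup]
    exact Subgroup.map_eq_top_of_topologicalClosure_eq_top hgen QuotientGroup.continuous_mk
      (QuotientGroup.mk'_surjective _)
  have hEgen : (⨆ i, E i).topologicalClosure = ⊤ := by
    rw [Subgroup.iSup_subgroupOf_iSup_eq_top]
    exact eq_top_iff.2 (Subgroup.le_topologicalClosure ⊤)
  have hEP : IsEmbeddingProblem D q ψ E :=
    ⟨QuotientGroup.continuous_mk, QuotientGroup.mk'_surjective _,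
      continuous_fst.comp continuous_subtype_val, MonoidHom.range_eq_top.1 hψ,
      fun i => isClosed_discrete _, hEgen, hbij⟩
  obtain ⟨γ, hγ, -, hγψ, hγE⟩ := hsolve _ _ q ψ E hEP
  refine ⟨(MonoidHom.snd _ F).comp (B.subtype.comp γ),
    continuous_snd.comp (continuous_subtype_val.comp hγ), fun i x => ?_⟩
  have hγx : γ x ∈ E i := hγE i ▸ Subgroup.mem_map_of_mem γ x.2
  have hfx : (⟨f i x, le_iSup (fun i => (f i).range) i ⟨x, rfl⟩⟩ : B) ∈ E i := ⟨x, rfl⟩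
  have := (hbij i).injOn hγx hfx (hγψ x)
  exact congrArg (fun b : B => b.1.2) this

theorem eq_one_of_forall_mem_openNormalSubgroup {H : Type*} [Group H] [TopologicalSpace H]
    [IsTopologicalGroup H] [CompactSpace H] [T2Space H] [TotallyDisconnectedSpace H] {h : H}
    (hh : ∀ U : OpenNormalSubgroup H, h ∈ U) : h = 1 := by
  by_contra hne
  obtain ⟨U, hU⟩ := ProfiniteGrp.exist_openNormalSubgroup_sub_open_nhds_of_one
    isOpen_compl_singleton (Ne.symm hne)
  exact hU (hh U) rfl

theorem MonoidHom.ext_of_topologicalClosure_iSup_eq_top {P H : Type*} [Group P]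
    [TopologicalSpace P] [IsTopologicalGroup P] [Group H] [TopologicalSpace H] [T2Space H]
    {ι : Sort*} {S : ι → Subgroup P} (hS : (⨆ i, S i).topologicalClosure = ⊤) {f g : P →* H}
    (hf : Continuous f) (hg : Continuous g) (h : ∀ i, ∀ x ∈ S i, f x = g x) : f = g := by
  have hle : ⊤ ≤ f.eqLocus g := hS ▸
    Subgroup.topologicalClosure_minimal _ (iSup_le fun i x hx => h i x hx) (isClosed_eq hf hg)
  exact ext fun x => hle trivial

theorem Subgroup.map_fst_topologicalClosure_eq_top {G H : Type*} [Group G] [TopologicalSpace G]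
    [IsTopologicalGroup G] [CompactSpace G] [T2Space G] [Group H] [TopologicalSpace H]
    [IsTopologicalGroup H] [CompactSpace H] {S : Subgroup (G × H)}
    (hS : (S.map (MonoidHom.fst G H)).topologicalClosure = ⊤) :
    S.topologicalClosure.map (MonoidHom.fst G H) = ⊤ := by
  have hclosed : IsClosed (S.topologicalClosure.map (MonoidHom.fst G H) : Set G) :=
    (S.isClosed_topologicalClosure.isCompact.image continuous_fst).isClosed
  rw [eq_top_iff, ← hS]
  exact topologicalClosure_minimal _ (map_mono S.le_topologicalClosure) hclosed

theorem exists_continuous_monoidHom_of_graph {G H : Type*} [Group G] [TopologicalSpace G]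
    [CompactSpace G] [T2Space G] [Group H] [TopologicalSpace H] [CompactSpace H]
    (Γ : Subgroup (G × H)) (hΓ : IsClosed (Γ : Set (G × H)))
    (hsurj : Γ.map (MonoidHom.fst G H) = ⊤) (hinj : ∀ h, ((1 : G), h) ∈ Γ → h = 1) :
    ∃ φ : G →* H, Continuous φ ∧ ∀ p ∈ Γ, φ p.1 = p.2 := by
  have : CompactSpace Γ := isCompact_iff_compactSpace.1 hΓ.isCompact
  let p : Γ →* G := (MonoidHom.fst G H).comp Γ.subtype
  have hp : Function.Bijective p := by
    refine ⟨(injective_iff_map_eq_one p).2 ?_, fun g => ?_⟩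
    · rintro ⟨⟨g, h⟩, hgh⟩ (rfl : g = 1)
      cases hinj h hgh
      rfl
    · obtain ⟨q, hq, rfl⟩ := hsurj.ge (Subgroup.mem_top g)
      exact ⟨⟨q, hq⟩, rfl⟩
  let e : Γ ≃* G := MulEquiv.ofBijective p hp
  have he : Continuous e.symm := (Continuous.homeoOfEquivCompactToT2 (f := e.toEquiv)
    (continuous_fst.comp continuous_subtype_val)).symm.continuous
  refine ⟨((MonoidHom.snd G H).comp Γ.subtype).comp e.symm.toMonoidHom,
    (continuous_snd.comp continuous_subtype_val).comp he, fun q hq => ?_⟩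
  have : e.symm q.1 = ⟨q, hq⟩ := e.symm_apply_eq.2 rfl
  simp [this]

theorem stmt2 {n : ℕ} (G : Type) [Group G] [TopologicalSpace G] [IsTopologicalGroup G]
    [CompactSpace G] [T2Space G] [TotallyDisconnectedSpace G]
    (D : Fin n → Subgroup G)
    (hclosed : ∀ i, IsClosed (D i : Set G))
    (hgen : (⨆ i, D i).topologicalClosure = ⊤)
    (hsolve : ∀ (A B : Type) [Group A] [TopologicalSpace A] [IsTopologicalGroup A]
        [CompactSpace A] [T2Space A] [TotallyDisconnectedSpace A]
        [Group B] [TopologicalSpace B] [IsTopologicalGroup B]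
        [CompactSpace B] [T2Space B] [TotallyDisconnectedSpace B] [Finite B]
        (φ : G →* A) (ψ : B →* A) (E : Fin n → Subgroup B),
        IsEmbeddingProblem D φ ψ E → ∃ γ : G →* B, IsEPSolution D φ ψ E γ) :
    IsFreeProfiniteProduct G D := by
  refine ⟨hclosed, hgen, fun H _ _ _ _ _ _ η hη => ?_⟩
  let Γ := (⨆ i, ((D i).subtype.prod (η i)).range).topologicalClosure
  have hgraph : ∀ i (x : D i), ((x : G), η i x) ∈ Γ := fun i x =>
    Subgroup.le_topologicalClosure _ (Subgroup.mem_iSup_of_mem i ⟨x, rfl⟩)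
  have hsurj : Γ.map (MonoidHom.fst G H) = ⊤ := by
    refine Subgroup.map_fst_topologicalClosure_eq_top ?_
    have hfst : ∀ i, (MonoidHom.fst G H).comp ((D i).subtype.prod (η i)) = (D i).subtype :=
      fun i => MonoidHom.fst_comp_prod _ _
    simpa only [Subgroup.map_iSup, MonoidHom.map_range, hfst, Subgroup.range_subtype] using hgen
  have hinj : ∀ h, ((1 : G), h) ∈ Γ → h = 1 := by
    intro h hh
    refine eq_one_of_forall_mem_openNormalSubgroup fun U => ?_
    let π := QuotientGroup.mk' (U : Subgroup H)
    obtain ⟨θ, hθ, hθη⟩ := SolvesFiniteEmbeddingProblems.exists_extension hsolve hgen _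
      (fun i => π.comp (η i)) fun i => QuotientGroup.continuous_mk.comp (hη i)
    have hΓ : Γ ≤ (θ.comp (MonoidHom.fst G H)).eqLocus (π.comp (MonoidHom.snd G H)) :=
      Subgroup.topologicalClosure_minimal _
        (iSup_le fun i => by rintro _ ⟨x, rfl⟩; exact hθη i x)
        (isClosed_eq (hθ.comp continuous_fst) (QuotientGroup.continuous_mk.comp continuous_snd))
    have hπ : π h = 1 := by simpa using (hΓ hh).symm
    exact (QuotientGroup.eq_one_iff h).1 hπ
  obtain ⟨φ, hφ, hφΓ⟩ := exists_continuous_monoidHom_of_graph Γ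
    (Subgroup.isClosed_topologicalClosure _) hsurj hinj
  refine ⟨φ, ⟨hφ, fun i x => hφΓ _ (hgraph i x)⟩, fun φ' ⟨hφ', hφ'η⟩ => ?_⟩
  exact MonoidHom.ext_of_topologicalClosure_iSup_eq_top hgen hφ' hφ fun i x hx =>
    (hφ'η i ⟨x, hx⟩).trans (hφΓ _ (hgraph i ⟨x, hx⟩)).symm
end

section
/- Let G be a profinite group and G_1, …, G_n closed subgroups which topologically generate G. Suppose every finite embedding problem for (G, G_1, …, G_n) has a solution. Then every embedding problem (φ : G → A, ψ : B → A, B_1, …, B_n) for (G, G_1, …, G_n) in which A is finite (but B is an arbitrary profinite group) has a solution. -/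
/-!
By Zorn's lemma there is a minimal closed subgroup `Γ` of the fibre product `G ×_A B` which
projects onto `G` and in which every element of `D i` has a partner in `E i` and vice versa;
compactness of `G × B` keeps these properties under intersections of chains. If the kernel
`N = {b | (1, b) ∈ Γ}` is trivial, `Γ` is the graph of a solution. Otherwise pick `b ∈ N`,
`b ≠ 1`, and an open normal subgroup `M ≤ ker ψ` with `b ∉ M`; this is where `A` finite is
used. Then `Γ` induces an epimorphism `G → B/NM = (B/M)/(NM/M)`, and `B/M → B/NM` is a finite
embedding problem (injective on the images of the `E i` because `NM ≤ ker ψ`). Cutting `Γ` down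
by the graph of a solution `G → B/M` gives a smaller partial solution whose kernel lies in `M`,
contradicting minimality.
-/

open Set

theorem continuous_of_isClosed_graph {X Y : Type*} [TopologicalSpace X] [TopologicalSpace Y]
    [CompactSpace Y] {f : X → Y} (hf : IsClosed {p : X × Y | f p.1 = p.2}) : Continuous f := by
  refine continuous_iff_isClosed.mpr fun C hC => ?_
  have hpre : f ⁻¹' C = Prod.fst '' ({p : X × Y | f p.1 = p.2} ∩ univ ×ˢ C) := by
    ext x
    constructor
    · exact fun hx => ⟨(x, f x), ⟨rfl, trivial, hx⟩, rfl⟩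
    · rintro ⟨p, ⟨hp, -, hpC⟩, rfl⟩
      rwa [mem_preimage, hp]
  rw [hpre]
  exact isClosedMap_fst_of_compactSpace _ (hf.inter (isClosed_univ.prod hC))

theorem exists_mem_prod_forall_mem_of_directed {X Y ι : Type*} [TopologicalSpace X]
    [TopologicalSpace Y] [CompactSpace X] [CompactSpace Y] [Nonempty ι] {t : ι → Set (X × Y)}
    (htd : Directed (· ⊇ ·) t) (htc : ∀ i, IsClosed (t i)) {s : Set X} {u : Set Y}
    (hs : IsClosed s) (hu : IsClosed u) (h : ∀ i, ∃ x ∈ s, ∃ y ∈ u, (x, y) ∈ t i) :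
    ∃ x ∈ s, ∃ y ∈ u, ∀ i, (x, y) ∈ t i := by
  have hK := hs.prod hu
  obtain ⟨p, hp⟩ := IsCompact.nonempty_iInter_of_directed_nonempty_isCompact_isClosed
    (fun i => s ×ˢ u ∩ t i) (htd.mono_comp _ fun _ _ h => inter_subset_inter_right _ h)
    (fun i => by obtain ⟨x, hx, y, hy, hxy⟩ := h i; exact ⟨(x, y), ⟨hx, hy⟩, hxy⟩)
    (fun i => (hK.inter (htc i)).isCompact) (fun i => hK.inter (htc i))
  obtain ⟨i₀⟩ := ‹Nonempty ι›
  rw [mem_iInter] at hp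
  exact ⟨p.1, (hp i₀).1.1, p.2, (hp i₀).1.2, fun i => (hp i).2⟩

theorem exists_openNormalSubgroup_subset_notMem {B : Type*} [Group B] [TopologicalSpace B]
    [IsTopologicalGroup B] [CompactSpace B] [T2Space B] [TotallyDisconnectedSpace B]
    {U : Set B} (hU : IsClopen U) (h1U : 1 ∈ U) {b : B} (hb : b ≠ 1) :
    ∃ M : OpenNormalSubgroup B, (M : Set B) ⊆ U ∧ b ∉ M := by
  have : TotallySeparatedSpace B := loc_compact_t2_tot_disc_iff_tot_sep.mp ‹_›
  obtain ⟨V, hV, h1V, hbV⟩ := exists_isClopen_of_totally_separated hb.symm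
  obtain ⟨M, hM⟩ :=
    IsTopologicalGroup.exist_openNormalSubgroup_sub_clopen_nhds_of_one (hU.inter hV) ⟨h1U, h1V⟩
  exact ⟨M, fun x hx => (hM hx).1, fun hbM => hbV (hM hbM).2⟩

theorem Subgroup.map_eq_top_of_topologicalClosure_eq_top_s4 {B C : Type*} [Group B] [Group C]
    [TopologicalSpace B] [IsTopologicalGroup B] [TopologicalSpace C] [DiscreteTopology C]
    {H : Subgroup B} (hH : H.topologicalClosure = ⊤) {f : B →* C} (hfc : Continuous f)
    (hfs : Function.Surjective f) : H.map f = ⊤ := by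
  refine eq_top_iff.mpr fun c _ => ?_
  obtain ⟨b, rfl⟩ := hfs c
  have hb : b ∈ _root_.closure (H : Set B) := by
    rw [← Subgroup.topologicalClosure_coe, hH]
    trivial
  simpa [closure_discrete] using image_closure_subset_closure_image hfc (mem_image_of_mem f hb)

namespace Subgroup

variable {G B C : Type*} [Group G] [Group B] [Group C] (Γ : Subgroup (G × B))

def kerFst : Subgroup B := Γ.comap (MonoidHom.inr G B)

variable {Γ}

theorem mem_kerFst {b : B} : b ∈ Γ.kerFst ↔ ((1 : G), b) ∈ Γ := Iff.rfl

theorem inv_mul_mem_kerFst {g : G} {b b' : B} (hb : (g, b) ∈ Γ) (hb' : (g, b') ∈ Γ) :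
    b⁻¹ * b' ∈ Γ.kerFst := by
  simpa [mem_kerFst] using mul_mem (inv_mem hb) hb'

theorem kerFst_normal (hΓ : ∀ b, ∃ g, (g, b) ∈ Γ) : Γ.kerFst.Normal where
  conj_mem b hb b' := by
    obtain ⟨g, hg⟩ := hΓ b'
    simpa [mem_kerFst] using mul_mem (mul_mem hg hb) (inv_mem hg)

variable (hΓ : ∀ g, ∃ b, (g, b) ∈ Γ) (c : B →* C) (hc : Γ.kerFst ≤ c.ker)
include hc

theorem eq_of_mem_of_mem {g : G} {b b' : B} (hb : (g, b) ∈ Γ) (hb' : (g, b') ∈ Γ) :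
    c b = c b' := by
  simpa [inv_mul_eq_one] using hc (inv_mul_mem_kerFst hb hb')

noncomputable def fstLift : G →* C where
  toFun g := c (hΓ g).choose
  map_one' := by
    rw [eq_of_mem_of_mem c hc (hΓ 1).choose_spec Γ.one_mem, map_one]
  map_mul' g h := by
    rw [eq_of_mem_of_mem c hc (hΓ (g * h)).choose_spec
      (Γ.mul_mem (hΓ g).choose_spec (hΓ h).choose_spec), map_mul]

theorem fstLift_apply {g : G} {b : B} (hb : (g, b) ∈ Γ) : Γ.fstLift hΓ c hc g = c b :=
  eq_of_mem_of_mem c hc (hΓ g).choose_spec hb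

theorem continuous_fstLift [TopologicalSpace G] [TopologicalSpace B] [TopologicalSpace C]
    [CompactSpace G] [CompactSpace B] [CompactSpace C] [T2Space G] [T2Space C]
    (hΓc : IsClosed (Γ : Set (G × B))) (hcc : Continuous c) :
    Continuous (Γ.fstLift hΓ c hc) := by
  refine continuous_of_isClosed_graph ?_
  have hgraph : {p : G × C | Γ.fstLift hΓ c hc p.1 = p.2} = Prod.map id c '' Γ := by
    ext ⟨g, x⟩
    constructor
    · exact fun h => ⟨(g, _), (hΓ g).choose_spec, Prod.ext rfl h⟩
    · rintro ⟨⟨g, b⟩, hb, hgx⟩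
      simp only [Prod.map, id, Prod.mk.injEq] at hgx
      obtain ⟨rfl, rfl⟩ := hgx
      exact fstLift_apply hΓ c hc hb
  rw [hgraph]
  exact (hΓc.isCompact.image (continuous_id.prodMap hcc)).isClosed

end Subgroup

section PartialSolution

variable {n : ℕ} {G A B : Type*} [Group G] [Group A] [Group B]
  (D : Fin n → Subgroup G) (φ : G →* A) (ψ : B →* A) (E : Fin n → Subgroup B)

def fiberProd : Subgroup (G × B) :=
  (φ.comp (MonoidHom.fst G B)).eqLocus (ψ.comp (MonoidHom.snd G B))

variable {φ ψ} in
theorem mem_fiberProd {p : G × B} : p ∈ fiberProd φ ψ ↔ φ p.1 = ψ p.2 := Iff.rfl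

variable [TopologicalSpace G] [TopologicalSpace B]

/-- An approximation from above of the graph of a solution: the solutions are exactly the
partial solutions with trivial `kerFst`. -/
structure IsPartialSolution (Γ : Subgroup (G × B)) : Prop where
  isClosed : IsClosed (Γ : Set (G × B))
  le_fiberProd : Γ ≤ fiberProd φ ψ
  exists_snd : ∀ g, ∃ b, (g, b) ∈ Γ
  exists_snd_mem : ∀ i, ∀ g ∈ D i, ∃ e ∈ E i, (g, e) ∈ Γ
  exists_fst_mem : ∀ i, ∀ e ∈ E i, ∃ g ∈ D i, (g, e) ∈ Γ

variable {D φ ψ E}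

theorem isPartialSolution_fiberProd [TopologicalSpace A] [T2Space A]
    (hφ : Continuous φ) (hψ : Continuous ψ) (hψs : Function.Surjective ψ)
    (hbij : ∀ i, Set.BijOn ψ (E i) (φ '' (D i))) :
    IsPartialSolution D φ ψ E (fiberProd φ ψ) where
  isClosed := isClosed_eq (hφ.comp continuous_fst) (hψ.comp continuous_snd)
  le_fiberProd := le_rfl
  exists_snd g := (hψs (φ g)).imp fun _ hb => hb.symm
  exists_snd_mem i g hg := by
    obtain ⟨e, he, hψe⟩ := (hbij i).surjOn (mem_image_of_mem φ hg)
    exact ⟨e, he, hψe.symm⟩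
  exists_fst_mem i e he := by
    obtain ⟨g, hg, hφg⟩ := (hbij i).mapsTo he
    exact ⟨g, hg, hφg⟩

theorem IsPartialSolution.kerFst_le_ker {Γ : Subgroup (G × B)}
    (hΓ : IsPartialSolution D φ ψ E Γ) : Γ.kerFst ≤ ψ.ker := fun b hb => by
  simpa using (mem_fiberProd.mp (hΓ.le_fiberProd hb)).symm

theorem IsPartialSolution.iInf [CompactSpace G] [CompactSpace B] [T1Space G] [T1Space B]
    {ι : Type*} [Nonempty ι] {Γ : ι → Subgroup (G × B)}
    (hΓ : ∀ j, IsPartialSolution D φ ψ E (Γ j))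
    (hdir : Directed (· ≥ ·) Γ) (hD : ∀ i, IsClosed (D i : Set G))
    (hE : ∀ i, IsClosed (E i : Set B)) : IsPartialSolution D φ ψ E (⨅ j, Γ j) := by
  have hdir' : Directed (· ⊇ ·) fun j => (Γ j : Set (G × B)) :=
    hdir.mono_comp _ fun _ _ h => h
  have hcl j := (hΓ j).isClosed
  refine ⟨?_, iInf_le_of_le (Classical.arbitrary ι) (hΓ _).le_fiberProd, fun g => ?_,
    fun i g hg => ?_, fun i e he => ?_⟩
  · rw [Subgroup.coe_iInf]
    exact isClosed_iInter hcl
  · obtain ⟨_, rfl, b, -, hb⟩ := exists_mem_prod_forall_mem_of_directed hdir' hcl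
      isClosed_singleton isClosed_univ fun j =>
        ((hΓ j).exists_snd g).elim fun b hb => ⟨g, rfl, b, trivial, hb⟩
    exact ⟨b, Subgroup.mem_iInf.mpr hb⟩
  · obtain ⟨_, rfl, e, he, hge⟩ := exists_mem_prod_forall_mem_of_directed hdir' hcl
      isClosed_singleton (hE i) fun j => ⟨g, rfl, (hΓ j).exists_snd_mem i g hg⟩
    exact ⟨e, he, Subgroup.mem_iInf.mpr hge⟩
  · obtain ⟨g, hg, _, rfl, hge⟩ := exists_mem_prod_forall_mem_of_directed hdir' hcl
      (hD i) isClosed_singleton fun j =>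
        ((hΓ j).exists_fst_mem i e he).elim fun g ⟨hg, hge⟩ => ⟨g, hg, e, rfl, hge⟩
    exact ⟨g, hg, Subgroup.mem_iInf.mpr hge⟩

theorem exists_minimal_isPartialSolution [CompactSpace G] [CompactSpace B] [T1Space G]
    [T1Space B] (hD : ∀ i, IsClosed (D i : Set G)) (hE : ∀ i, IsClosed (E i : Set B))
    {Γ₀ : Subgroup (G × B)} (hΓ₀ : IsPartialSolution D φ ψ E Γ₀) :
    ∃ Γ, Minimal (IsPartialSolution D φ ψ E) Γ := by
  obtain ⟨Γ, -, hΓ⟩ := zorn_le_nonempty₀ (α := (Subgroup (G × B))ᵒᵈ)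
    {Γ | IsPartialSolution D φ ψ E (OrderDual.ofDual Γ)} (fun c hc hchain Γ hΓ => by
      have : Nonempty c := ⟨⟨Γ, hΓ⟩⟩
      exact ⟨OrderDual.toDual (⨅ Γ : c, OrderDual.ofDual Γ.1),
        IsPartialSolution.iInf (fun Γ => hc Γ.2) hchain.directedOn.directed_val hD hE,
        fun Γ hΓ => iInf_le (fun Γ : c => OrderDual.ofDual Γ.1) ⟨Γ, hΓ⟩⟩)
    (OrderDual.toDual Γ₀) hΓ₀
  exact ⟨OrderDual.ofDual Γ, hΓ.of_dual⟩

theorem IsPartialSolution.exists_fst [IsTopologicalGroup B] [CompactSpace G]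
    {Γ : Subgroup (G × B)} (hΓ : IsPartialSolution D φ ψ E Γ)
    (hgen : (⨆ i, E i).topologicalClosure = ⊤) (b : B) :
    ∃ g, (g, b) ∈ Γ := by
  have hclosed : IsClosed (Γ.map (MonoidHom.snd G B) : Set B) := by
    simpa using isClosedMap_snd_of_compactSpace _ hΓ.isClosed
  have hle : ⊤ ≤ Γ.map (MonoidHom.snd G B) := by
    refine hgen ▸ Subgroup.topologicalClosure_minimal _ (iSup_le fun i e he => ?_) hclosed
    obtain ⟨g, -, hge⟩ := hΓ.exists_fst_mem i e he
    exact ⟨(g, e), hge, rfl⟩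
  obtain ⟨⟨g, b⟩, hgb, rfl⟩ := hle (Subgroup.mem_top b)
  exact ⟨g, hgb⟩

end PartialSolution

section FiniteQuotient

variable {n : ℕ} {G A B : Type} [Group G] [Group A] [Group B]
  {D : Fin n → Subgroup G} {φ : G →* A} {ψ : B →* A} {E : Fin n → Subgroup B}
  (Γ : Subgroup (G × B)) (M : Subgroup B) [M.Normal]

instance Subgroup.normal_map_mk' {H : Subgroup B} [H.Normal] :
    (H.map (QuotientGroup.mk' M)).Normal :=
  .map ‹_› _ (QuotientGroup.mk'_surjective M)

variable [Γ.kerFst.Normal]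

def doubleQuotientMk : B →* (B ⧸ M) ⧸ Γ.kerFst.map (QuotientGroup.mk' M) :=
  (QuotientGroup.mk' _).comp (QuotientGroup.mk' M)

theorem ker_doubleQuotientMk : (doubleQuotientMk Γ M).ker = Γ.kerFst ⊔ M := by
  rw [doubleQuotientMk, ← MonoidHom.comap_ker, QuotientGroup.ker_mk', Subgroup.comap_map_eq,
    QuotientGroup.ker_mk']

variable [TopologicalSpace G] [TopologicalSpace B] {Γ}

noncomputable def IsPartialSolution.liftMod (hΓ : IsPartialSolution D φ ψ E Γ) :
    G →* (B ⧸ M) ⧸ Γ.kerFst.map (QuotientGroup.mk' M) :=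
  Γ.fstLift hΓ.exists_snd (doubleQuotientMk Γ M)
    (le_sup_left.trans (ker_doubleQuotientMk Γ M).ge)

variable (hΓ : IsPartialSolution D φ ψ E Γ)
include hΓ

theorem IsPartialSolution.liftMod_apply {g : G} {b : B} (hgb : (g, b) ∈ Γ) :
    hΓ.liftMod M g = doubleQuotientMk Γ M b :=
  Γ.fstLift_apply _ _ _ hgb

variable {M}

theorem IsPartialSolution.injOn_doubleQuotientMk (hMψ : M ≤ ψ.ker)
    (hinj : ∀ i, Set.InjOn ψ (E i)) (i : Fin n) : Set.InjOn (doubleQuotientMk Γ M) (E i) := by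
  intro e he e' he' hee'
  have hker : e⁻¹ * e' ∈ ψ.ker := by
    refine sup_le hΓ.kerFst_le_ker hMψ ((ker_doubleQuotientMk Γ M).le ?_)
    simp [MonoidHom.mem_ker, hee']
  exact hinj i he he' (by simpa [inv_mul_eq_one] using hker)

theorem IsPartialSolution.isEmbeddingProblem_liftMod [IsTopologicalGroup B] [CompactSpace G]
    [CompactSpace B] [T2Space G] (hgen : (⨆ i, E i).topologicalClosure = ⊤)
    (hMo : IsOpen (M : Set B)) (hMψ : M ≤ ψ.ker) (hinj : ∀ i, Set.InjOn ψ (E i)) :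
    IsEmbeddingProblem D (hΓ.liftMod M) (QuotientGroup.mk' (Γ.kerFst.map (QuotientGroup.mk' M)))
      (fun i => (E i).map (QuotientGroup.mk' M)) := by
  have : DiscreteTopology (B ⧸ M) := QuotientGroup.discreteTopology hMo
  have : Finite (B ⧸ M) := M.quotient_finite_of_isOpen hMo
  have : DiscreteTopology ((B ⧸ M) ⧸ Γ.kerFst.map (QuotientGroup.mk' M)) :=
    QuotientGroup.discreteTopology (isOpen_discrete _)
  have hmk := QuotientGroup.mk'_surjective (Γ.kerFst.map (QuotientGroup.mk' M))
  refine ⟨Γ.continuous_fstLift _ _ _ hΓ.isClosed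
      (continuous_quotient_mk'.comp continuous_quotient_mk'), fun a => ?_,
    continuous_of_discreteTopology, hmk, fun i => isClosed_discrete _, ?_,
    fun i => ⟨?_, ?_, ?_⟩⟩
  · obtain ⟨b, rfl⟩ := hmk.comp (QuotientGroup.mk'_surjective M) a
    obtain ⟨g, hgb⟩ := hΓ.exists_fst hgen b
    exact ⟨g, hΓ.liftMod_apply M hgb⟩
  · rw [← Subgroup.map_iSup, Subgroup.map_eq_top_of_topologicalClosure_eq_top_s4 hgen
      continuous_quotient_mk' (QuotientGroup.mk'_surjective M)]
    exact eq_top_iff.mpr (Subgroup.le_topologicalClosure _)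
  · rintro _ ⟨e, he, rfl⟩
    obtain ⟨g, hg, hge⟩ := hΓ.exists_fst_mem i e he
    exact ⟨g, hg, hΓ.liftMod_apply M hge⟩
  · rintro _ ⟨e, he, rfl⟩ _ ⟨e', he', rfl⟩ hee'
    rw [hΓ.injOn_doubleQuotientMk hMψ hinj i he he' hee']
  · rintro _ ⟨g, hg, rfl⟩
    obtain ⟨e, he, hge⟩ := hΓ.exists_snd_mem i g hg
    exact ⟨QuotientGroup.mk' M e, ⟨e, he, rfl⟩, (hΓ.liftMod_apply M hge).symm⟩

theorem IsPartialSolution.isPartialSolution_inf_eqLocus [IsTopologicalGroup B]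
    (hMo : IsOpen (M : Set B)) (hMψ : M ≤ ψ.ker) (hinj : ∀ i, Set.InjOn ψ (E i))
    {γ : G →* B ⧸ M}
    (hγ : IsEPSolution D (hΓ.liftMod M) (QuotientGroup.mk' (Γ.kerFst.map (QuotientGroup.mk' M)))
      (fun i => (E i).map (QuotientGroup.mk' M)) γ) :
    IsPartialSolution D φ ψ E
      (Γ ⊓ (γ.comp (MonoidHom.fst G B)).eqLocus
        ((QuotientGroup.mk' M).comp (MonoidHom.snd G B))) := by
  obtain ⟨hγc, -, hγψ, hγD⟩ := hγ
  have : DiscreteTopology (B ⧸ M) := QuotientGroup.discreteTopology hMo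
  have hpartner i g (hg : g ∈ D i) e (he : e ∈ E i) (hge : (g, e) ∈ Γ) :
      γ g = QuotientGroup.mk' M e := by
    obtain ⟨e', he', hγg⟩ : γ g ∈ (E i).map (QuotientGroup.mk' M) :=
      (hγD i).le ⟨g, hg, rfl⟩
    rw [← hγg, hΓ.injOn_doubleQuotientMk hMψ hinj i he' he]
    rw [← hΓ.liftMod_apply M hge, ← hγψ g, ← hγg]
    rfl
  refine ⟨hΓ.isClosed.inter (isClosed_eq (hγc.comp continuous_fst)
      (continuous_quotient_mk'.comp continuous_snd)), inf_le_left.trans hΓ.le_fiberProd,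
    fun g => ?_, fun i g hg => ?_, fun i e he => ?_⟩
  · obtain ⟨b, hgb⟩ := hΓ.exists_snd g
    obtain ⟨ν, hν, hνeq⟩ :
        (QuotientGroup.mk' M b)⁻¹ * γ g ∈ Γ.kerFst.map (QuotientGroup.mk' M) :=
      QuotientGroup.eq.mp ((hΓ.liftMod_apply M hgb).symm.trans (hγψ g).symm)
    refine ⟨b * ν, by simpa using Γ.mul_mem hgb hν, ?_⟩
    change γ g = QuotientGroup.mk' M (b * ν)
    rw [map_mul, hνeq, mul_inv_cancel_left]
  · obtain ⟨e, he, hge⟩ := hΓ.exists_snd_mem i g hg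
    exact ⟨e, he, hge, hpartner i g hg e he hge⟩
  · obtain ⟨g, hg, hge⟩ := hΓ.exists_fst_mem i e he
    exact ⟨g, hg, hge, hpartner i g hg e he hge⟩

end FiniteQuotient

section Solution

variable {n : ℕ} {G A B : Type} [Group G] [Group A] [Group B] [TopologicalSpace G]
  [TopologicalSpace B] [IsTopologicalGroup B]
  {D : Fin n → Subgroup G} {φ : G →* A} {ψ : B →* A} {E : Fin n → Subgroup B}
  {Γ : Subgroup (G × B)}

theorem IsPartialSolution.exists_isEPSolution_of_kerFst_eq_bot [CompactSpace G] [CompactSpace B]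
    [T2Space G] [T2Space B] (hΓ : IsPartialSolution D φ ψ E Γ)
    (hgen : (⨆ i, E i).topologicalClosure = ⊤) (hker : Γ.kerFst = ⊥) :
    ∃ γ : G →* B, IsEPSolution D φ ψ E γ := by
  have hc : Γ.kerFst ≤ (MonoidHom.id B).ker := by simp [hker]
  have hγ {g : G} {b : B} (hgb : (g, b) ∈ Γ) : Γ.fstLift hΓ.exists_snd _ hc g = b :=
    Γ.fstLift_apply _ _ hc hgb
  refine ⟨Γ.fstLift hΓ.exists_snd (MonoidHom.id B) hc,
    Γ.continuous_fstLift _ _ hc hΓ.isClosed continuous_id, fun b => ?_, fun g => ?_,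
    fun i => le_antisymm ?_ fun e he => ?_⟩
  · obtain ⟨g, hgb⟩ := hΓ.exists_fst hgen b
    exact ⟨g, hγ hgb⟩
  · obtain ⟨b, hgb⟩ := hΓ.exists_snd g
    rw [hγ hgb]
    exact (mem_fiberProd.mp (hΓ.le_fiberProd hgb)).symm
  · rintro _ ⟨g, hg, rfl⟩
    obtain ⟨e, he, hge⟩ := hΓ.exists_snd_mem i g hg
    rwa [hγ hge]
  · obtain ⟨g, hg, hge⟩ := hΓ.exists_fst_mem i e he
    exact ⟨g, hg, hγ hge⟩

variable (D) in
def FiniteEmbeddingProblemsSolvable : Prop :=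
  ∀ (A B : Type) [Group A] [TopologicalSpace A] [IsTopologicalGroup A]
    [CompactSpace A] [T2Space A] [TotallyDisconnectedSpace A]
    [Group B] [TopologicalSpace B] [IsTopologicalGroup B]
    [CompactSpace B] [T2Space B] [TotallyDisconnectedSpace B] [Finite B]
    (φ : G →* A) (ψ : B →* A) (E : Fin n → Subgroup B),
    IsEmbeddingProblem D φ ψ E → ∃ γ : G →* B, IsEPSolution D φ ψ E γ

theorem kerFst_eq_bot_of_minimal [CompactSpace G] [T2Space G] [CompactSpace B] [T2Space B]
    [TotallyDisconnectedSpace B] [TopologicalSpace A] [T2Space A] [Finite A]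
    (hsolve : FiniteEmbeddingProblemsSolvable D) (hEP : IsEmbeddingProblem D φ ψ E)
    (hΓ : Minimal (IsPartialSolution D φ ψ E) Γ) : Γ.kerFst = ⊥ := by
  obtain ⟨-, -, hψc, -, -, hgen, hbij⟩ := hEP
  have hinj i := (hbij i).injOn
  have := Γ.kerFst_normal (hΓ.prop.exists_fst hgen)
  refine eq_bot_iff.mpr fun b hb => Subgroup.mem_bot.mpr (by_contra fun hb1 => ?_)
  have hkerOpen : IsOpen (ψ.ker : Set B) := (isOpen_discrete {1}).preimage hψc
  obtain ⟨M, hMψ, hbM⟩ := exists_openNormalSubgroup_subset_notMem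
    ⟨ψ.ker.isClosed_of_isOpen hkerOpen, hkerOpen⟩ (one_mem ψ.ker) hb1
  have hMo : IsOpen (M : Set B) := M.isOpen
  have : DiscreteTopology (B ⧸ M.toSubgroup) := QuotientGroup.discreteTopology hMo
  have : Finite (B ⧸ M.toSubgroup) := M.quotient_finite_of_isOpen hMo
  have : DiscreteTopology
      ((B ⧸ M.toSubgroup) ⧸ Γ.kerFst.map (QuotientGroup.mk' M.toSubgroup)) :=
    QuotientGroup.discreteTopology (isOpen_discrete _)
  obtain ⟨γ, hγ⟩ := hsolve _ _ _ _ _ (hΓ.prop.isEmbeddingProblem_liftMod hgen hMo hMψ hinj)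
  have hΓγ := hΓ.eq_of_le (hΓ.prop.isPartialSolution_inf_eqLocus hMo hMψ hinj hγ) inf_le_left
  rw [← hΓγ] at hb
  have hγb : γ 1 = QuotientGroup.mk' M.toSubgroup b := hb.2
  exact hbM ((QuotientGroup.eq_one_iff b).mp
    (by rw [← QuotientGroup.mk'_apply, ← hγb, map_one]))

end Solution

theorem stmt4_general {n : ℕ} (G : Type) [Group G] [TopologicalSpace G]
    [CompactSpace G] [T2Space G]
    (D : Fin n → Subgroup G)
    (hclosed : ∀ i, IsClosed (D i : Set G))
    (hsolve : ∀ (A B : Type) [Group A] [TopologicalSpace A] [IsTopologicalGroup A]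
        [CompactSpace A] [T2Space A] [TotallyDisconnectedSpace A]
        [Group B] [TopologicalSpace B] [IsTopologicalGroup B]
        [CompactSpace B] [T2Space B] [TotallyDisconnectedSpace B] [Finite B]
        (φ : G →* A) (ψ : B →* A) (E : Fin n → Subgroup B),
        IsEmbeddingProblem D φ ψ E → ∃ γ : G →* B, IsEPSolution D φ ψ E γ)
    (A B : Type) [Group A] [TopologicalSpace A]
    [T2Space A] [Finite A]
    [Group B] [TopologicalSpace B] [IsTopologicalGroup B]
    [CompactSpace B] [T2Space B] [TotallyDisconnectedSpace B]
    (φ : G →* A) (ψ : B →* A) (E : Fin n → Subgroup B)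
    (hEP : IsEmbeddingProblem D φ ψ E) :
    ∃ γ : G →* B, IsEPSolution D φ ψ E γ := by
  obtain ⟨hφc, -, hψc, hψs, hEcl, hEgen, hbij⟩ := id hEP
  obtain ⟨Γ, hΓ⟩ := exists_minimal_isPartialSolution hclosed hEcl
    (isPartialSolution_fiberProd hφc hψc hψs hbij)
  exact hΓ.prop.exists_isEPSolution_of_kerFst_eq_bot hEgen
    (kerFst_eq_bot_of_minimal hsolve hEP hΓ)

theorem stmt4 {n : ℕ} (G : Type) [Group G] [TopologicalSpace G] [IsTopologicalGroup G]
    [CompactSpace G] [T2Space G] [TotallyDisconnectedSpace G]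
    (D : Fin n → Subgroup G)
    (hclosed : ∀ i, IsClosed (D i : Set G))
    (hgen : (⨆ i, D i).topologicalClosure = ⊤)
    (hsolve : ∀ (A B : Type) [Group A] [TopologicalSpace A] [IsTopologicalGroup A]
        [CompactSpace A] [T2Space A] [TotallyDisconnectedSpace A]
        [Group B] [TopologicalSpace B] [IsTopologicalGroup B]
        [CompactSpace B] [T2Space B] [TotallyDisconnectedSpace B] [Finite B]
        (φ : G →* A) (ψ : B →* A) (E : Fin n → Subgroup B),
        IsEmbeddingProblem D φ ψ E → ∃ γ : G →* B, IsEPSolution D φ ψ E γ)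
    (A B : Type) [Group A] [TopologicalSpace A] [IsTopologicalGroup A]
    [CompactSpace A] [T2Space A] [TotallyDisconnectedSpace A] [Finite A]
    [Group B] [TopologicalSpace B] [IsTopologicalGroup B]
    [CompactSpace B] [T2Space B] [TotallyDisconnectedSpace B]
    (φ : G →* A) (ψ : B →* A) (E : Fin n → Subgroup B)
    (hEP : IsEmbeddingProblem D φ ψ E) :
    ∃ γ : G →* B, IsEPSolution D φ ψ E γ :=
  stmt4_general G D hclosed hsolve A B φ ψ E hEP
end

section
/- Let p be a prime and G_1, …, G_n pro-p groups. Let G* denote their free product in the category of all profinite groups and G*ᵖ their free product in the category of pro-p groups, and let α : G* → G*ᵖ be the continuous epimorphism whose restriction to each G_i is the identity. Then α has a continuous group-theoretic section α' : G*ᵖ → G*; in particular, the free pro-p product G*ᵖ embeds as a closed subgroup of the free profinite product G*. -/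
/-! Let `K = ker α`. In a finite quotient `G* ⧸ N` the image of `K` has `p`-power index, so a
Sylow `p`-subgroup `P` maps onto `(G* ⧸ N) ⧸ K`; hence every image of `G_i` can be conjugated into
`P` by an element of the image of `K`. Such conjugators form nonempty closed sets in `K ^ n` that
shrink as `N` does, so by compactness there are `g_i ∈ K` working for every `N` at once, and then
the closure `S` of the group generated by the `g_i G_i g_i⁻¹` is pro-`p`. The universal property of
`G*ᵖ` yields `α' : G*ᵖ → S` extending `x ↦ g_i x g_i⁻¹`, and `α ∘ α'` fixes every `G_i` because
`α (g_i) = 1`, so it is the identity. -/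

/-- A topological group is pro-`p` if every open normal subgroup has `p`-power index,
i.e. every finite continuous quotient is a `p`-group. -/
def IsProP (p : ℕ) (H : Type) [Group H] [TopologicalSpace H] : Prop :=
  ∀ (U : Subgroup H), ∀ _ : U.Normal, IsOpen (U : Set H) → IsPGroup p (H ⧸ U)

/-- `G` with closed subgroups `D i` is the free pro-`p` product of the `D i`:
the same universal property, with `H` ranging over pro-`p` groups. -/
def IsFreeProPProduct (p : ℕ) {n : ℕ} (G : Type) [Group G] [TopologicalSpace G]
    [IsTopologicalGroup G] (D : Fin n → Subgroup G) : Prop :=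
  (∀ i, IsClosed (D i : Set G)) ∧
  (⨆ i, D i).topologicalClosure = ⊤ ∧
  ∀ (H : Type) [Group H] [TopologicalSpace H] [IsTopologicalGroup H] [CompactSpace H]
      [T2Space H] [TotallyDisconnectedSpace H], IsProP p H →
    ∀ (η : ∀ i, ↥(D i) →* H), (∀ i, Continuous (η i)) →
    ∃! φ : G →* H, Continuous φ ∧ ∀ i (x : ↥(D i)), φ x = η i x

namespace Sylow

variable {p : ℕ} [Fact p.Prime] {Q R : Type*} [Group Q] [Group R] [Finite Q]
  {f : Q →* R}

theorem map_eq_top_of_surjective_of_isPGroup (hf : Function.Surjective f) (hR : IsPGroup p R)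
    (P : Sylow p Q) : P.map f = ⊤ :=
  ((P.mapSurjective hf).3 (hR.to_subgroup ⊤) le_top).symm

/-- `P` maps onto the `p`-group `R`, so a conjugator moving `H` into `P` can be multiplied by an
element of `P` with the same image to land in the kernel. -/
theorem exists_mem_ker_conj_mem (hf : Function.Surjective f) (hR : IsPGroup p R)
    (P : Sylow p Q) {H : Subgroup Q} (hH : IsPGroup p H) :
    ∃ k ∈ f.ker, ∀ h ∈ H, k * h * k⁻¹ ∈ P := by
  obtain ⟨P', hHP'⟩ := hH.exists_le_sylow
  obtain ⟨q, rfl⟩ := MulAction.exists_smul_eq Q P P'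
  obtain ⟨s, hs, hsq⟩ : f q ∈ (P : Subgroup Q).map f := by
    rw [P.map_eq_top_of_surjective_of_isPGroup hf hR]; trivial
  refine ⟨s * q⁻¹, by simp [hsq], fun h hh => ?_⟩
  have hconj : q⁻¹ * h * q ∈ (P : Subgroup Q) := by
    have := hHP' hh
    rw [Sylow.coe_subgroup_smul, Subgroup.mem_pointwise_smul_iff_inv_smul_mem] at this
    simpa [MulAut.smul_def, MulAut.conj_apply] using this
  have := P.mul_mem (P.mul_mem hs hconj) (P.inv_mem hs)
  simp only [mul_assoc, mul_inv_rev, inv_inv] at this ⊢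
  exact this

end Sylow

section ProP

variable {p : ℕ} {G : Type} [Group G] [TopologicalSpace G]

theorem IsProP.isPGroup_map_mk {H : Subgroup G} (hH : IsProP p H) (N : OpenNormalSubgroup G) :
    IsPGroup p (H.map (QuotientGroup.mk' (N : Subgroup G))) := by
  rintro ⟨-, d, hd, rfl⟩
  obtain ⟨k, hk⟩ := hH ((N : Subgroup G).comap H.subtype) inferInstance
    (N.isOpen.preimage continuous_subtype_val) (QuotientGroup.mk ⟨d, hd⟩)
  refine ⟨k, Subtype.ext ?_⟩
  rw [← QuotientGroup.mk_pow, QuotientGroup.eq_one_iff] at hk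
  simpa [← QuotientGroup.mk_pow, QuotientGroup.eq_one_iff, Subgroup.mem_subgroupOf] using hk

theorem isProP_of_forall_isPGroup_map_mk [IsTopologicalGroup G] [CompactSpace G]
    [TotallyDisconnectedSpace G] {H : Subgroup G}
    (hH : ∀ N : OpenNormalSubgroup G, IsPGroup p (H.map (QuotientGroup.mk' (N : Subgroup G)))) :
    IsProP p H := by
  intro U _ hU q
  induction q using QuotientGroup.induction_on with | H s => ?_
  obtain ⟨V, hV, hVU⟩ := isOpen_induced_iff.mp hU
  obtain ⟨N, hNV⟩ := ProfiniteGrp.exist_openNormalSubgroup_sub_open_nhds_of_one hV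
    (show (1 : H) ∈ Subtype.val ⁻¹' V by rw [hVU]; exact U.one_mem)
  obtain ⟨k, hk⟩ := hH N ⟨_, Subgroup.mem_map_of_mem _ s.2⟩
  refine ⟨k, ?_⟩
  have hsN : (s : G) ^ p ^ k ∈ (N : Subgroup G) := by
    simpa [← QuotientGroup.mk_pow, QuotientGroup.eq_one_iff] using congrArg Subtype.val hk
  rw [← QuotientGroup.mk_pow, QuotientGroup.eq_one_iff, ← SetLike.mem_coe, ← hVU]
  exact hNV hsN

end ProP

section Conjugators

variable {p : ℕ} {ι G : Type} [Group G]

def ConjugatesIntoPGroupMod (p : ℕ) (D : ι → Subgroup G) (N : Subgroup G) [N.Normal]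
    (g : ι → G) : Prop :=
  ∃ P : Subgroup (G ⧸ N), IsPGroup p P ∧ ∀ i, ∀ d ∈ D i, ((g i * d * (g i)⁻¹ : G) : G ⧸ N) ∈ P

theorem ConjugatesIntoPGroupMod.mono {D : ι → Subgroup G} {N M : Subgroup G} [N.Normal]
    [M.Normal] (hNM : N ≤ M) {g : ι → G} (h : ConjugatesIntoPGroupMod p D N g) :
    ConjugatesIntoPGroupMod p D M g := by
  obtain ⟨P, hP, hgP⟩ := h
  let π := QuotientGroup.map N M (MonoidHom.id G) hNM
  exact ⟨P.map π, hP.map π, fun i d hd => Subgroup.mem_map_of_mem π (hgP i d hd)⟩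

theorem isClosed_setOf_conjugatesIntoPGroupMod [TopologicalSpace G] [IsTopologicalGroup G]
    [Finite ι] (D : ι → Subgroup G) {N : Subgroup G} [N.Normal] (hN : IsOpen (N : Set G)) :
    IsClosed {g : ι → G | ConjugatesIntoPGroupMod p D N g} := by
  have := QuotientGroup.discreteTopology hN
  exact (isClosed_discrete {q : ι → G ⧸ N | ∃ P : Subgroup (G ⧸ N), IsPGroup p P ∧
      ∀ i, ∀ d ∈ D i, q i * (d : G ⧸ N) * (q i)⁻¹ ∈ P}).preimage
    (continuous_pi fun i => continuous_quot_mk.comp (continuous_apply i))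

theorem isProP_topologicalClosure_of_conjugatesIntoPGroupMod [TopologicalSpace G]
    [IsTopologicalGroup G] [CompactSpace G] [TotallyDisconnectedSpace G] {D : ι → Subgroup G}
    {g : ι → G} (h : ∀ N : OpenNormalSubgroup G, ConjugatesIntoPGroupMod p D N g) :
    IsProP p (⨆ i, (D i).map (MulAut.conj (g i)).toMonoidHom).topologicalClosure := by
  refine isProP_of_forall_isPGroup_map_mk fun N => ?_
  obtain ⟨P, hP, hgP⟩ := h N
  refine hP.to_le (Subgroup.map_le_iff_le_comap.mpr ?_)
  have hNP : (N : Subgroup G) ≤ P.comap (QuotientGroup.mk' (N : Subgroup G)) := fun x hx => by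
    simp [(QuotientGroup.eq_one_iff x).mpr hx]
  refine Subgroup.topologicalClosure_minimal _ (iSup_le fun i => ?_)
    (Subgroup.isClosed_of_isOpen _ (Subgroup.isOpen_mono hNP N.isOpen))
  rintro _ ⟨d, hd, rfl⟩
  exact hgP i d hd

variable [Fact p.Prime] [TopologicalSpace G] [IsTopologicalGroup G] [CompactSpace G]
  {H : Type} [Group H] [TopologicalSpace H] [IsTopologicalGroup H] [CompactSpace H] [T2Space H]
  {α : G →* H} {D : ι → Subgroup G}

theorem exists_ker_conjugatesIntoPGroupMod (hαc : Continuous α) (hαs : Function.Surjective α)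
    (hH : IsProP p H) (hD : ∀ i, IsProP p (D i)) (N : OpenNormalSubgroup G) :
    ∃ g : ι → G, (∀ i, α (g i) = 1) ∧ ConjugatesIntoPGroupMod p D N g := by
  let M : Subgroup H := (N : Subgroup G).map α
  have hMn : M.Normal := .map inferInstance α hαs
  have hMo : IsOpen (M : Set H) := α.isOpenMap_of_sigmaCompact hαs hαc _ N.isOpen
  let f := QuotientGroup.map (N : Subgroup G) M α (Subgroup.le_comap_map α _)
  have hf : Function.Surjective f := QuotientGroup.map_surjective_of_surjective _ M α
    (QuotientGroup.mk_surjective.comp hαs) _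
  have hlift : ∀ k ∈ f.ker, ∃ g : G, α g = 1 ∧ (g : G ⧸ (N : Subgroup G)) = k := by
    intro k hk
    induction k using QuotientGroup.induction_on with | H x => ?_
    obtain ⟨ν, hν, hνx⟩ : α x ∈ M := by
      simpa [f, QuotientGroup.eq_one_iff] using hk
    refine ⟨x * ν⁻¹, by simp [hνx], ?_⟩
    simpa [QuotientGroup.eq_one_iff] using hν
  obtain ⟨P⟩ : Nonempty (Sylow p (G ⧸ (N : Subgroup G))) := inferInstance
  have hconj : ∀ i, ∃ g : G, α g = 1 ∧
      ∀ d ∈ D i, ((g * d * g⁻¹ : G) : G ⧸ (N : Subgroup G)) ∈ P := by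
    intro i
    obtain ⟨k, hk, hkP⟩ := P.exists_mem_ker_conj_mem hf (hH M hMn hMo) ((hD i).isPGroup_map_mk N)
    obtain ⟨g, hg, rfl⟩ := hlift k hk
    exact ⟨g, hg, fun d hd => hkP _ (Subgroup.mem_map_of_mem _ hd)⟩
  choose g hg hgP using hconj
  exact ⟨g, hg, P, P.isPGroup', hgP⟩

theorem exists_ker_forall_conjugatesIntoPGroupMod [Finite ι] (hαc : Continuous α)
    (hαs : Function.Surjective α) (hH : IsProP p H) (hD : ∀ i, IsProP p (D i)) :
    ∃ g : ι → G, (∀ i, α (g i) = 1) ∧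
      ∀ N : OpenNormalSubgroup G, ConjugatesIntoPGroupMod p D N g := by
  let C : OpenNormalSubgroup G → Set (ι → G) := fun N =>
    {g | ∀ i, α (g i) = 1} ∩ {g | ConjugatesIntoPGroupMod p D N g}
  have hker : IsClosed {g : ι → G | ∀ i, α (g i) = 1} := by
    simp only [Set.ofPred_forall]
    exact isClosed_iInter fun i => isClosed_eq (hαc.comp (continuous_apply i)) continuous_const
  have hC : ∀ N, IsClosed (C N) := fun N =>
    hker.inter (isClosed_setOf_conjugatesIntoPGroupMod D N.isOpen)
  have hCdir : Directed (· ⊇ ·) C := fun N M =>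
    ⟨N ⊓ M, fun _ hg => ⟨hg.1, hg.2.mono inf_le_left⟩, fun _ hg => ⟨hg.1, hg.2.mono inf_le_right⟩⟩
  have : Nonempty (OpenNormalSubgroup G) :=
    ⟨{ toOpenSubgroup := ⊤, isNormal' := Subgroup.normal_top }⟩
  obtain ⟨g, hg⟩ := IsCompact.nonempty_iInter_of_directed_nonempty_isCompact_isClosed C hCdir
    (exists_ker_conjugatesIntoPGroupMod hαc hαs hH hD) (fun N => (hC N).isCompact) hC
  rw [Set.mem_iInter] at hg
  exact ⟨g, (hg (Classical.arbitrary _)).1, fun N => (hg N).2⟩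

end Conjugators

theorem IsFreeProPProduct.hom_ext {p n : ℕ} {G : Type} [Group G] [TopologicalSpace G]
    [IsTopologicalGroup G] {E : Fin n → Subgroup G} (hG : IsFreeProPProduct p G E)
    {H : Type} [Group H] [TopologicalSpace H] [IsTopologicalGroup H] [CompactSpace H] [T2Space H]
    [TotallyDisconnectedSpace H] (hH : IsProP p H) {φ ψ : G →* H} (hφ : Continuous φ)
    (hψ : Continuous ψ) (hφψ : ∀ i (x : E i), φ x = ψ x) : φ = ψ :=
  (hG.2.2 H hH (fun i => ψ.comp (E i).subtype) fun _ => hψ.comp continuous_subtype_val).unique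
    ⟨hφ, hφψ⟩ ⟨hψ, fun _ _ => rfl⟩

theorem stmt19_general {n : ℕ} (p : ℕ) (hp : p.Prime)
    -- `G*` is the free profinite product of the pro-`p` groups `G_i` (realized as its
    -- closed subgroups `D i`)
    (Gstar : Type) [Group Gstar] [TopologicalSpace Gstar] [IsTopologicalGroup Gstar]
    [CompactSpace Gstar] [T2Space Gstar] [TotallyDisconnectedSpace Gstar]
    (D : Fin n → Subgroup Gstar)
    (hD : ∀ i, IsProP p ↥(D i))
    -- `G*ᵖ` is the free pro-`p` product of the same groups (realized as its closed
    -- subgroups `E i`, identified with the `D i` via the continuous isomorphisms `e i`)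
    (Gp : Type) [Group Gp] [TopologicalSpace Gp] [IsTopologicalGroup Gp]
    [CompactSpace Gp] [T2Space Gp] [TotallyDisconnectedSpace Gp]
    (E : Fin n → Subgroup Gp) (hGp : IsProP p Gp)
    (hfreep : IsFreeProPProduct p Gp E)
    (e : ∀ i, ↥(D i) ≃* ↥(E i))
    (he : ∀ i, Continuous (e i) ∧ Continuous (e i).symm)
    -- `α : G* → G*ᵖ` is the continuous epimorphism restricting to the identity on each `G_i`
    (α : Gstar →* Gp) (hαcont : Continuous α) (hαsurj : Function.Surjective α)
    (hα : ∀ (i : Fin n) (x : ↥(D i)), α x = (e i x : Gp)) :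
    ∃ α' : Gp →* Gstar, Continuous α' ∧ ∀ y, α (α' y) = y := by
  have : Fact p.Prime := ⟨hp⟩
  obtain ⟨g, hgker, hg⟩ := exists_ker_forall_conjugatesIntoPGroupMod hαcont hαsurj hGp hD
  set S := (⨆ i, (D i).map (MulAut.conj (g i)).toMonoidHom).topologicalClosure
  have hSc : IsClosed (S : Set Gstar) := Subgroup.isClosed_topologicalClosure _
  have : CompactSpace S := isCompact_iff_compactSpace.mp hSc.isCompact
  have hgS : ∀ i (x : E i), g i * ((e i).symm x : Gstar) * (g i)⁻¹ ∈ S := fun i x =>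
    Subgroup.le_topologicalClosure _ <| Subgroup.mem_iSup_of_mem i ⟨_, ((e i).symm x).2, rfl⟩
  let η : ∀ i, E i →* S := fun i =>
    ((MulAut.conj (g i)).toMonoidHom.comp ((D i).subtype.comp (e i).symm.toMonoidHom)).codRestrict
      S (hgS i)
  have hη : ∀ i, Continuous (η i) := fun i =>
    ((continuous_const.mul (continuous_subtype_val.comp (he i).2)).mul
      continuous_const).subtype_mk _
  obtain ⟨φ, ⟨hφc, hφη⟩, -⟩ :=
    hfreep.2.2 S (isProP_topologicalClosure_of_conjugatesIntoPGroupMod hg) η hη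
  have hαφ : α.comp (S.subtype.comp φ) = MonoidHom.id Gp :=
    hfreep.hom_ext hGp (hαcont.comp (continuous_subtype_val.comp hφc)) continuous_id fun i x => by
      simp [hφη i x, η, hgker i, hα]
  exact ⟨S.subtype.comp φ, continuous_subtype_val.comp hφc, DFunLike.congr_fun hαφ⟩

theorem stmt19 {n : ℕ} (p : ℕ) (hp : p.Prime)
    -- `G*` is the free profinite product of the pro-`p` groups `G_i` (realized as its
    -- closed subgroups `D i`)
    (Gstar : Type) [Group Gstar] [TopologicalSpace Gstar] [IsTopologicalGroup Gstar]
    [CompactSpace Gstar] [T2Space Gstar] [TotallyDisconnectedSpace Gstar]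
    (D : Fin n → Subgroup Gstar)
    (hD : ∀ i, IsProP p ↥(D i))
    (hfree : IsFreeProfiniteProduct Gstar D)
    -- `G*ᵖ` is the free pro-`p` product of the same groups (realized as its closed
    -- subgroups `E i`, identified with the `D i` via the continuous isomorphisms `e i`)
    (Gp : Type) [Group Gp] [TopologicalSpace Gp] [IsTopologicalGroup Gp]
    [CompactSpace Gp] [T2Space Gp] [TotallyDisconnectedSpace Gp]
    (E : Fin n → Subgroup Gp) (hGp : IsProP p Gp)
    (hfreep : IsFreeProPProduct p Gp E)
    (e : ∀ i, ↥(D i) ≃* ↥(E i))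
    (he : ∀ i, Continuous (e i) ∧ Continuous (e i).symm)
    -- `α : G* → G*ᵖ` is the continuous epimorphism restricting to the identity on each `G_i`
    (α : Gstar →* Gp) (hαcont : Continuous α) (hαsurj : Function.Surjective α)
    (hα : ∀ (i : Fin n) (x : ↥(D i)), α x = (e i x : Gp)) :
    ∃ α' : Gp →* Gstar, Continuous α' ∧ ∀ y, α (α' y) = y :=
  stmt19_general p hp Gstar D hD Gp E hGp hfreep e he α hαcont hαsurj hα
end
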